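/- arXiv:1203.5948 — 2 statements merged into one kernel-verified Lean document; each statement's English description precedes it below -/
import Mathlib

section
/- If λ₁ and λ₂ are two admissible labellings of a finite interval order P, then there exists an order automorphism f of P such that λ₁(x) = λ₂(f(x)) for all x; i.e., the admissible labelling of an interval order is unique up to automorphism. -/
/-- The principal down-set `I(x) = {z | z < x}` (excluding `x`). -/
def Iset {X : Type*} [PartialOrder X] (x : X) : Set X := {z | z < x}

/-- The principal up-set `F(x) = {z | z > x}` (excluding `x`). -/
def Fset {X : Type*} [PartialOrder X] (x : X) : Set X := {z | x < z}

/-- Order equivalence: same principal down-set and up-set. -/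
def OrdEquiv {X : Type*} [PartialOrder X] (x y : X) : Prop :=
  Iset x = Iset y ∧ Fset x = Fset y

/-- Incomparability. -/
def Incomp {X : Type*} [PartialOrder X] (a b : X) : Prop := ¬ a ≤ b ∧ ¬ b ≤ a

/-- `P` avoids the poset `2+2`: no two 2-chains with all cross pairs incomparable. -/
def Avoids22 (X : Type*) [PartialOrder X] : Prop :=
  ¬ ∃ a b c d : X, a < b ∧ c < d ∧
    Incomp a c ∧ Incomp a d ∧ Incomp b c ∧ Incomp b d

/-- `P` is an interval order: it has a representation by closed real intervals. -/
def IsIntervalOrder (X : Type*) [PartialOrder X] : Prop :=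
  ∃ a b : X → ℝ, (∀ x, a x ≤ b x) ∧ ∀ x y : X, x < y ↔ b x < a y

/-- An admissible labelling: a linear extension `λ : X → Fin |X|` such that
`λ x < λ y` implies `I(x) ⊊ I(y)`, or `I(x) = I(y)` and `F(x) ⊊ F(y)`, or `x ∼ y`. -/
def IsAdmissible {X : Type*} [PartialOrder X] [Fintype X]
    (lab : X ≃ Fin (Fintype.card X)) : Prop :=
  (∀ x y : X, x < y → lab x < lab y) ∧
  ∀ x y : X, lab x < lab y →
    Iset x ⊂ Iset y ∨ (Iset x = Iset y ∧ Fset x ⊂ Fset y) ∨ OrdEquiv x y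

section
variable {X : Type*} [PartialOrder X]

def Prec (x y : X) : Prop :=
  Iset x ⊂ Iset y ∨ (Iset x = Iset y ∧ Fset x ⊂ Fset y)

lemma prec_irrefl (x : X) : ¬ Prec x x := by
  rintro (h | ⟨_, h⟩) <;> exact ssubset_irrefl _ h

lemma prec_trans {x y z : X} (h1 : Prec x y) (h2 : Prec y z) : Prec x z := by
  rcases h1 with h1 | ⟨e1, f1⟩ <;> rcases h2 with h2 | ⟨e2, f2⟩
  · exact Or.inl (h1.trans h2)
  · exact Or.inl (e2 ▸ h1)
  · exact Or.inl (e1 ▸ h2)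
  · exact Or.inr ⟨e1.trans e2, f1.trans f2⟩

lemma prec_asymm {x y : X} (h1 : Prec x y) (h2 : Prec y x) : False :=
  prec_irrefl x (prec_trans h1 h2)

lemma prec_not_ordEquiv {x y : X} (h1 : Prec x y) (h2 : OrdEquiv x y) : False := by
  rcases h1 with h1 | ⟨_, h1⟩
  · exact h1.ne h2.1
  · exact h1.ne h2.2

lemma prec_of_ordEquiv_left {x y w : X} (h : OrdEquiv x y) (hp : Prec y w) : Prec x w := by
  unfold Prec
  rw [h.1, h.2]
  exact hp

lemma Iset_total (h : Avoids22 X) (x y : X) : Iset x ⊆ Iset y ∨ Iset y ⊆ Iset x := by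
  by_contra hc
  push_neg at hc
  obtain ⟨h1, h2⟩ := hc
  rw [Set.not_subset] at h1 h2
  obtain ⟨a, hax, hay⟩ := h1
  obtain ⟨c, hcy, hcx⟩ := h2
  simp only [Iset, Set.mem_setOf_eq] at hax hay hcy hcx
  refine h ⟨a, x, c, y, hax, hcy, ?_, ?_, ?_, ?_⟩
  · exact ⟨fun hle => hay (lt_of_le_of_lt hle hcy), fun hle => hcx (lt_of_le_of_lt hle hax)⟩
  · constructor
    · intro hle
      rcases lt_or_eq_of_le hle with h' | h'
      · exact hay h'
      · subst h'; exact hcx (hcy.trans hax)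
    · intro hle
      exact hcx ((hcy.trans_le hle).trans hax)
  · constructor
    · intro hle
      exact hay ((hax.trans_le hle).trans hcy)
    · intro hle
      rcases lt_or_eq_of_le hle with h' | h'
      · exact hcx h'
      · subst h'; exact hay (hax.trans hcy)
  · exact ⟨fun hle => hay (hax.trans_le hle), fun hle => hcx (hcy.trans_le hle)⟩

lemma Fset_total (h : Avoids22 X) (x y : X) : Fset x ⊆ Fset y ∨ Fset y ⊆ Fset x := by
  by_contra hc
  push_neg at hc
  obtain ⟨h1, h2⟩ := hc
  rw [Set.not_subset] at h1 h2
  obtain ⟨a, hxa, hya⟩ := h1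
  obtain ⟨c, hyc, hxc⟩ := h2
  simp only [Fset, Set.mem_setOf_eq] at hxa hya hyc hxc
  refine h ⟨x, a, y, c, hxa, hyc, ?_, ?_, ?_, ?_⟩
  · exact ⟨fun hle => hxc (lt_of_le_of_lt hle hyc), fun hle => hya (lt_of_le_of_lt hle hxa)⟩
  · constructor
    · intro hle
      rcases lt_or_eq_of_le hle with h' | h'
      · exact hxc h'
      · subst h'; exact hya (hyc.trans hxa)
    · intro hle
      exact hya ((hyc.trans_le hle).trans hxa)
  · constructor
    · intro hle
      exact hxc ((hxa.trans_le hle).trans hyc)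
    · intro hle
      rcases lt_or_eq_of_le hle with h' | h'
      · exact hya h'
      · subst h'; exact hxc (hxa.trans hyc)
  · exact ⟨fun hle => hxc (hxa.trans_le hle), fun hle => hya (hyc.trans_le hle)⟩

lemma prec_trichotomy (h : Avoids22 X) (x y : X) : Prec x y ∨ Prec y x ∨ OrdEquiv x y := by
  by_cases hI : Iset x = Iset y
  · by_cases hF : Fset x = Fset y
    · exact Or.inr (Or.inr ⟨hI, hF⟩)
    · rcases Fset_total h x y with h2 | h2
      · exact Or.inl (Or.inr ⟨hI, h2.ssubset_of_ne hF⟩)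
      · exact Or.inr (Or.inl (Or.inr ⟨hI.symm, h2.ssubset_of_ne fun e => hF e.symm⟩))
  · rcases Iset_total h x y with h1 | h1
    · exact Or.inl (Or.inl (h1.ssubset_of_ne hI))
    · exact Or.inr (Or.inl (Or.inl (h1.ssubset_of_ne fun e => hI e.symm)))

lemma lab_lt_of_prec [Fintype X] {lab : X ≃ Fin (Fintype.card X)} (hl : IsAdmissible lab)
    {x y : X} (hxy : Prec x y) : lab x < lab y := by
  rcases lt_trichotomy (lab x) (lab y) with h | h | h
  · exact h
  · exact absurd hxy (by rw [lab.injective h]; exact prec_irrefl y)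
  · rcases hl.2 y x h with h' | h' | h'
    · exact absurd (Or.inl h') (fun hh => prec_asymm hxy hh)
    · exact absurd (Or.inr h' : Prec y x) (fun hh => prec_asymm hxy hh)
    · exact absurd ⟨h'.1.symm, h'.2.symm⟩ (fun hh => prec_not_ordEquiv hxy hh)

lemma card_lt_eq [Fintype X] (lab : X ≃ Fin (Fintype.card X)) (x : X) :
    (Finset.univ.filter (fun z => lab z < lab x)).card = (lab x : ℕ) := by
  classical
  rw [Finset.card_equiv lab (t := Finset.Iio (lab x)) (fun z => by simp)]
  simp

lemma no_prec [Fintype X] (h : Avoids22 X)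
    {labA labB : X ≃ Fin (Fintype.card X)} (hA : IsAdmissible labA) (hB : IsAdmissible labB)
    {x y : X} (hxy : labA x = labB y) (hp : Prec x y) : False := by
  classical
  set S := Finset.univ.filter (fun z => Prec z y) with hSdef
  set T := Finset.univ.filter (fun z => z ≠ x ∧ (Prec z x ∨ OrdEquiv z x)) with hTdef
  have hS : S.card ≤ (labA x : ℕ) := by
    have hsub : S ⊆ Finset.univ.filter (fun z => labB z < labB y) := by
      intro z hz
      simp only [hSdef, Finset.mem_filter, Finset.mem_univ, true_and] at hz ⊢
      exact lab_lt_of_prec hB hz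
    calc S.card ≤ _ := Finset.card_le_card hsub
      _ = (labB y : ℕ) := card_lt_eq labB y
      _ = (labA x : ℕ) := by rw [hxy]
  have hT : (labA x : ℕ) ≤ T.card := by
    have hsub : Finset.univ.filter (fun z => labA z < labA x) ⊆ T := by
      intro z hz
      simp only [Finset.mem_filter, Finset.mem_univ, true_and] at hz
      simp only [hTdef, Finset.mem_filter, Finset.mem_univ, true_and]
      refine ⟨fun he => by subst he; exact lt_irrefl _ hz, ?_⟩
      rcases hA.2 z x hz with h' | h' | h'
      · exact Or.inl (Or.inl h')
      · exact Or.inl (Or.inr h')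
      · exact Or.inr h'
    calc (labA x : ℕ) = _ := (card_lt_eq labA x).symm
      _ ≤ T.card := Finset.card_le_card hsub
  have hxT : x ∉ T := by simp [hTdef]
  have hins : insert x T ⊆ S := by
    intro z hz
    simp only [hSdef, Finset.mem_filter, Finset.mem_univ, true_and]
    rcases Finset.mem_insert.mp hz with h' | h'
    · subst h'; exact hp
    · simp only [hTdef, Finset.mem_filter, Finset.mem_univ, true_and] at h'
      rcases h'.2 with h'' | h''
      · exact prec_trans h'' hp
      · exact prec_of_ordEquiv_left h'' hp
  have hcard : T.card + 1 ≤ S.card := by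
    rw [← Finset.card_insert_of_notMem hxT]
    exact Finset.card_le_card hins
  omega

end

theorem stmt8 {X : Type*} [PartialOrder X] [Fintype X] (h : Avoids22 X)
    (lab₁ lab₂ : X ≃ Fin (Fintype.card X))
    (h₁ : IsAdmissible lab₁) (h₂ : IsAdmissible lab₂) :
    ∃ f : X ≃ X, (∀ u v : X, u ≤ v ↔ f u ≤ f v) ∧ ∀ x : X, lab₁ x = lab₂ (f x) := by
  classical
  set f : X ≃ X := lab₁.trans lab₂.symm with hf
  have hfx : ∀ x, lab₂ (f x) = lab₁ x := fun x => lab₂.apply_symm_apply _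
  have key : ∀ x : X, OrdEquiv x (f x) := by
    intro x
    rcases prec_trichotomy h x (f x) with hp | hp | hp
    · exact absurd hp (fun hp => no_prec h h₁ h₂ (hfx x).symm hp)
    · exact absurd hp (fun hp => no_prec h h₂ h₁ (hfx x) hp)
    · exact hp
  have hlt : ∀ a b : X, a < b ↔ f a < f b := by
    intro a b
    have h1 : a < b ↔ a < f b := Set.ext_iff.mp (key b).1 a
    have h2 : a < f b ↔ f a < f b := Set.ext_iff.mp (key a).2 (f b)
    exact h1.trans h2
  refine ⟨f, ?_, fun x => (hfx x).symm⟩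
  intro u v
  constructor
  · intro huv
    rcases huv.lt_or_eq with h' | h'
    · exact ((hlt u v).mp h').le
    · exact (h' ▸ le_refl (f u))
  · intro huv
    rcases huv.lt_or_eq with h' | h'
    · exact ((hlt u v).mpr h').le
    · exact (f.injective h').le
end

section
/- For the poset P_T on [n] defined from a planar rooted tree T by x R y iff x = y or (y ∉ u(x) and x < y as preorder labels), the preorder labelling is an admissible labelling of P_T: if x ≤ y as labels, then I(x) ⊆ I(y), and if additionally I(x) = I(y) with x < y, then F(x) ⊆ F(y). -/
/-- `TreeDesc n par x y` : in the planar rooted tree on nodes `{0,1,…,n}` (root `0`,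
non-root nodes labelled `1,…,n` by the preorder visit) with parent function `par`,
the node `y` is a (proper) descendant of `x`, i.e. `y ∈ u(x)`. -/
def TreeDesc (n : ℕ) (par : ℕ → ℕ) : ℕ → ℕ → Prop :=
  Relation.TransGen (fun a b => a = par b ∧ 1 ≤ b ∧ b ≤ n)

/-- `par` is the parent function of a planar rooted tree whose non-root nodes
are labelled `1,…,n` by the preorder (depth-first, left-to-right) visit:
each node's parent has a smaller label, and each set of descendants `u(x)` is
an interval of consecutive labels starting right after `x`. -/
def IsPreorderTree (n : ℕ) (par : ℕ → ℕ) : Prop :=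
  (∀ x, 1 ≤ x → x ≤ n → par x < x) ∧
  (∀ x y z, TreeDesc n par x y → x < z → z < y → TreeDesc n par x z)

/-- The relation `R` of the poset `P_T` associated to the tree:
`x R y` iff `x = y`, or `y ∉ u(x)` and `x < y` as labels. -/
def TreeRel (n : ℕ) (par : ℕ → ℕ) (x y : ℕ) : Prop :=
  x = y ∨ (¬ TreeDesc n par x y ∧ x < y)

/-- Ground set `[n] = {1,…,n}`. -/
def Gnd (n : ℕ) : Set ℕ := {x | 1 ≤ x ∧ x ≤ n}

/-- Strict relation of `R`. -/
def TreeSlt (n : ℕ) (par : ℕ → ℕ) (x y : ℕ) : Prop := TreeRel n par x y ∧ x ≠ y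

/-- Incomparability in `R`. -/
def TreeIncomp (n : ℕ) (par : ℕ → ℕ) (x y : ℕ) : Prop :=
  ¬ TreeRel n par x y ∧ ¬ TreeRel n par y x

/-- Principal down-set of `x` in `P_T`, inside the ground set. -/
def TreeIset (n : ℕ) (par : ℕ → ℕ) (x : ℕ) : Set ℕ :=
  {z | z ∈ Gnd n ∧ TreeSlt n par z x}

/-- Principal up-set of `x` in `P_T`, inside the ground set. -/
def TreeFset (n : ℕ) (par : ℕ → ℕ) (x : ℕ) : Set ℕ :=
  {z | z ∈ Gnd n ∧ TreeSlt n par x z}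

/-!
Descendant sets are label intervals starting right after their root. So if `z < x ≤ y` and `z`
is an ancestor of `y`, then `x` is squeezed into `u(z)`; this gives `I(x) ⊆ I(y)`. If moreover
`I(x) = I(y)` with `x < y`, then `x ∉ I(y)` forces `y ∈ u(x)`. Any `z ∈ F(x)` lies beyond the
interval `u(x) ∋ y`, hence after `y` and outside `u(y) ⊆ u(x)`, i.e. `z ∈ F(y)`.
-/

section TreePoset

variable {n : ℕ} {par : ℕ → ℕ}

lemma treeSlt_iff {x y : ℕ} : TreeSlt n par x y ↔ ¬ TreeDesc n par x y ∧ x < y := by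
  constructor
  · rintro ⟨rfl | h, hne⟩
    · exact absurd rfl hne
    · exact h
  · rintro ⟨hnd, hlt⟩
    exact ⟨Or.inr ⟨hnd, hlt⟩, hlt.ne⟩

lemma treeIset_mono (hint : ∀ x y z, TreeDesc n par x y → x < z → z < y → TreeDesc n par x z)
    {x y : ℕ} (hxy : x ≤ y) : TreeIset n par x ⊆ TreeIset n par y := by
  rintro z ⟨hz, hzx⟩
  obtain ⟨hnd, hlt⟩ := treeSlt_iff.mp hzx
  refine ⟨hz, treeSlt_iff.mpr ⟨fun hzy => hnd ?_, hlt.trans_le hxy⟩⟩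
  rcases hxy.eq_or_lt with rfl | hxy
  · exact hzy
  · exact hint z y x hzy hlt hxy

lemma treeDesc_of_treeIset_eq {x y : ℕ} (hx : x ∈ Gnd n) (hxy : x < y)
    (hI : TreeIset n par x = TreeIset n par y) : TreeDesc n par x y := by
  by_contra hnd
  have hxIy : x ∈ TreeIset n par y := ⟨hx, treeSlt_iff.mpr ⟨hnd, hxy⟩⟩
  rw [← hI] at hxIy
  exact hxIy.2.2 rfl

lemma treeFset_subset_of_treeDesc
    (hint : ∀ x y z, TreeDesc n par x y → x < z → z < y → TreeDesc n par x z) {x y : ℕ}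
    (hxy : TreeDesc n par x y) : TreeFset n par x ⊆ TreeFset n par y := by
  rintro z ⟨hz, hxz⟩
  obtain ⟨hnd, hlt⟩ := treeSlt_iff.mp hxz
  refine ⟨hz, treeSlt_iff.mpr ⟨fun hyz => hnd (hxy.trans hyz), ?_⟩⟩
  by_contra! hzy
  rcases hzy.eq_or_lt with rfl | hzy
  · exact hnd hxy
  · exact hnd (hint x y z hxy hlt hzy)

end TreePoset

theorem stmt16 (n : ℕ) (par : ℕ → ℕ) (hT : IsPreorderTree n par) :
    (∀ x ∈ Gnd n, ∀ y ∈ Gnd n, x ≤ y → TreeIset n par x ⊆ TreeIset n par y) ∧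
    (∀ x ∈ Gnd n, ∀ y ∈ Gnd n, x < y → TreeIset n par x = TreeIset n par y →
      TreeFset n par x ⊆ TreeFset n par y) :=
  ⟨fun _ _ _ _ hxy => treeIset_mono hT.2 hxy,
    fun _ hx _ _ hxy hI => treeFset_subset_of_treeDesc hT.2 (treeDesc_of_treeIset_eq hx hxy hI)⟩
end
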